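/- arXiv:1411.1275 — 5 statements merged into one kernel-verified Lean document; each statement's English description precedes it below -/
import Mathlib

section
/- Let (a_i)_{i∈ℤ} and (b_i)_{i∈ℤ} be sequences of nonnegative integers such that: (i) there is an integer N with a_i = 0 for all i ≥ N and b_i = 0 for all i ≤ −N, and (ii) a_i → +∞ as i → −∞ and b_i → +∞ as i → +∞. Let X = Y = ⊕_{i∈ℤ} T⁺ (direct sum over ℤ of copies of T⁺) and let D : X → Y be the F[U]-module homomorphism whose i-th coordinate of D((x_j)_j) is U^{a_i}·x_i + U^{b_{i−1}}·x_{i−1}. Then the restriction of D to the submodule X' = {x ∈ X : x_0 = 0} is surjective. (Lemma 3.2 of the paper.) -/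
open Polynomial LaurentPolynomial DirectSum Filter

noncomputable section

/-- The tower `T⁺ = F[U,U⁻¹] / U·F[U]` as an `F[U]`-module. -/
abbrev Tplus (F : Type*) [Field F] :=
  LaurentPolynomial F ⧸ (Submodule.span (Polynomial F) {(T 1 : LaurentPolynomial F)})

lemma Tmul_mem {F : Type*} [Field F] (p : LaurentPolynomial F) :
    ∃ m : ℤ, ∀ k : ℤ, m ≤ k →
      T k * p ∈ Submodule.span (Polynomial F) {(T 1 : LaurentPolynomial F)} := by
  obtain ⟨n, f, hf⟩ := p.exists_T_pow
  refine ⟨(n : ℤ) + 1, fun k hk => ?_⟩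
  have hp : p = toLaurent f * T (-(n : ℤ)) := by
    rw [hf, mul_T_assoc]
    simp
  have key : T k * p = (f * X ^ (k - (n : ℤ) - 1).toNat) • (T 1 : LaurentPolynomial F) := by
    rw [Algebra.smul_def, algebraMap_eq_toLaurent, map_mul, toLaurent_X_pow, hp,
      mul_comm (T k), mul_T_assoc, mul_T_assoc]
    have he : -(n : ℤ) + k = ((k - (n : ℤ) - 1).toNat : ℤ) + 1 := by omega
    rw [he]
  rw [key]
  exact Submodule.smul_mem _ _ (Submodule.mem_span_singleton_self _)

lemma smul_mk {F : Type*} [Field F] (k : ℕ) (p : LaurentPolynomial F) :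
    (X : Polynomial F) ^ k • (Submodule.Quotient.mk p : Tplus F) =
      Submodule.Quotient.mk (T (k : ℤ) * p) := by
  rw [← Submodule.Quotient.mk_smul]
  congr 1
  rw [Algebra.smul_def, algebraMap_eq_toLaurent, toLaurent_X_pow]

lemma aux_seq {F : Type*} [Field F] (u v : ℕ → ℕ)
    (hgrow : ∀ᶠ n in atTop, 1 ≤ (v n : ℤ) - (u (n + 1) : ℤ)) (t : Tplus F) :
    ∃ g : ℕ → Tplus F, (X : Polynomial F) ^ (u 0) • g 0 = t ∧
      (∀ n, (X : Polynomial F) ^ (u (n + 1)) • g (n + 1)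
        + (X : Polynomial F) ^ (v n) • g n = 0) ∧
      ∃ n₀ : ℕ, ∀ n, n₀ ≤ n → g n = 0 := by
  obtain ⟨p, hp⟩ := Submodule.Quotient.mk_surjective _ t
  set d : ℕ → ℤ := fun n => -(u 0 : ℤ) + ∑ k ∈ Finset.range n, ((v k : ℤ) - (u (k + 1) : ℤ))
    with hd
  have hdsucc : ∀ n, d (n + 1) = d n + ((v n : ℤ) - (u (n + 1) : ℤ)) := by
    intro n
    simp only [hd, Finset.sum_range_succ]
    ring
  refine ⟨fun n => Submodule.Quotient.mk ((-1) ^ n * (T (d n) * p)), ?_, ?_, ?_⟩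
  · rw [smul_mk, ← hp]
    congr 1
    rw [pow_zero, one_mul, ← mul_assoc, ← T_add]
    have : (u 0 : ℤ) + d 0 = 0 := by simp [hd]
    rw [this, T_zero, one_mul]
  · intro n
    rw [smul_mk, smul_mk, ← Submodule.Quotient.mk_add]
    have hT : (T (u (n + 1) : ℤ) * T (d (n + 1)) : LaurentPolynomial F)
        = T (v n : ℤ) * T (d n) := by
      rw [← T_add, ← T_add]
      congr 1
      rw [hdsucc]
      ring
    have key : (T (u (n + 1) : ℤ) : LaurentPolynomial F) * ((-1) ^ (n + 1) * (T (d (n + 1)) * p))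
        + T (v n : ℤ) * ((-1) ^ n * (T (d n) * p)) = 0 := by
      have hs : ((-1 : LaurentPolynomial F) ^ (n + 1)) = -(-1) ^ n := by
        rw [pow_succ]; ring
      rw [hs]
      linear_combination (-((-1 : LaurentPolynomial F) ^ n) * p) * hT
    rw [key, Submodule.Quotient.mk_zero]
  · obtain ⟨m, hm⟩ := Tmul_mem p
    obtain ⟨n₁, hn₁⟩ := eventually_atTop.mp hgrow
    have hmono : ∀ k : ℕ, d n₁ + k ≤ d (n₁ + k) := by
      intro k
      induction k with
      | zero => simp
      | succ k ih =>
        have h1 := hn₁ (n₁ + k) (by omega)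
        have h2 := hdsucc (n₁ + k)
        have : n₁ + (k + 1) = (n₁ + k) + 1 := by omega
        rw [this, h2]
        push_cast
        omega
    refine ⟨n₁ + (m - d n₁).toNat, fun n hn => ?_⟩
    have h2 := hmono (n - n₁)
    have h3 : n₁ + (n - n₁) = n := by omega
    rw [h3] at h2
    have hdn : m ≤ d n := by omega
    have base := hm (d n) hdn
    refine (Submodule.Quotient.mk_eq_zero _).mpr ?_
    rcases Nat.even_or_odd n with he | ho
    · rw [he.neg_one_pow, one_mul]; exact base
    · rw [ho.neg_one_pow, neg_one_mul]; exact neg_mem base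

/-- Lemma 3.2: the restriction of `D` to `X' = {x : x₀ = 0}` is surjective. -/
theorem stmt_0 (F : Type*) [Field F] (a b : ℤ → ℕ)
    (hvanish : ∃ N : ℤ, (∀ i, N ≤ i → a i = 0) ∧ (∀ i, i ≤ -N → b i = 0))
    (ha : Tendsto a atBot atTop) (hb : Tendsto b atTop atTop)
    (D : (⨁ _i : ℤ, Tplus F) →ₗ[Polynomial F] (⨁ _i : ℤ, Tplus F))
    (hD : ∀ (x : ⨁ _i : ℤ, Tplus F) (i : ℤ),
      D x i = (X : Polynomial F) ^ (a i) • x i + (X : Polynomial F) ^ (b (i - 1)) • x (i - 1)) :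
    ∀ y : ⨁ _i : ℤ, Tplus F, ∃ x : ⨁ _i : ℤ, Tplus F, x 0 = 0 ∧ D x = y := by
  obtain ⟨N, hN, hbN⟩ := hvanish
  intro y
  induction y using DirectSum.induction_on with
  | zero => exact ⟨0, rfl, by rw [map_zero]⟩
  | add y₁ y₂ hy₁ hy₂ =>
    obtain ⟨x₁, h1, h1'⟩ := hy₁
    obtain ⟨x₂, h2, h2'⟩ := hy₂
    exact ⟨x₁ + x₂, by rw [DirectSum.add_apply, h1, h2, add_zero],
      by rw [map_add, h1', h2']⟩
  | of i t =>
    rcases lt_or_ge 0 i with hi | hi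
    · -- case i ≥ 1 : propagate upwards
      have hgrow : ∀ᶠ n : ℕ in atTop, 1 ≤ ((b (i + (n : ℤ)) : ℤ)) - (a (i + ((n + 1 : ℕ) : ℤ)) : ℤ) := by
        have h1 : Tendsto (fun n : ℕ => i + (n : ℤ)) atTop atTop :=
          tendsto_atTop_atTop.mpr fun c => ⟨(c - i).toNat, fun n hn => by omega⟩
        have h2 := (hb.comp h1).eventually_ge_atTop 1
        have h3 : ∀ᶠ n : ℕ in atTop, a (i + ((n + 1 : ℕ) : ℤ)) = 0 :=
          eventually_atTop.mpr ⟨(N - i).toNat, fun n hn => hN _ (by omega)⟩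
        filter_upwards [h2, h3] with n h2n h3n
        simp only [Function.comp_apply] at h2n
        omega
      obtain ⟨g, hg1, hg2, n₀, hg0⟩ :=
        aux_seq (fun n => a (i + (n : ℤ))) (fun n => b (i + (n : ℤ))) hgrow t
      simp only [Nat.cast_zero, add_zero] at hg1
      set s : Finset ℤ := (Finset.range n₀).image (fun n : ℕ => i + (n : ℤ)) with hs
      set x : ⨁ _i : ℤ, Tplus F :=
        DirectSum.mk (fun _ : ℤ => Tplus F) s (fun j => g (j.1 - i).toNat) with hxdef
      have hx : ∀ j : ℤ, x j = if i ≤ j then g (j - i).toNat else 0 := by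
        intro j
        by_cases hj : j ∈ s
        · rw [hxdef, DirectSum.mk_apply_of_mem hj]
          obtain ⟨n, hn, rfl⟩ := Finset.mem_image.mp hj
          rw [if_pos (by omega)]
        · rw [hxdef, DirectSum.mk_apply_of_notMem hj]
          symm
          split_ifs with h
          · apply hg0
            by_contra hlt
            push_neg at hlt
            exact hj (Finset.mem_image.mpr
              ⟨(j - i).toNat, Finset.mem_range.mpr hlt, by omega⟩)
          · rfl
      refine ⟨x, by rw [hx 0, if_neg (by omega)], ?_⟩
      apply DFunLike.ext
      intro j
      rw [hD x j, hx j, hx (j - 1)]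
      rcases lt_trichotomy j i with h | rfl | h
      · rw [if_neg (by omega), if_neg (by omega), smul_zero, smul_zero, add_zero,
          DirectSum.of_eq_of_ne _ _ _ (by omega)]
      · rw [if_pos le_rfl, if_neg (by omega), smul_zero, add_zero, DirectSum.of_eq_same]
        simpa using hg1
      · rw [if_pos (by omega), if_pos (by omega), DirectSum.of_eq_of_ne _ _ _ (by omega)]
        have h2 := hg2 (j - 1 - i).toNat
        have e1 : i + (((j - 1 - i).toNat + 1 : ℕ) : ℤ) = j := by omega
        have e2 : i + (((j - 1 - i).toNat : ℕ) : ℤ) = j - 1 := by omega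
        rw [e1, e2] at h2
        have hn1 : (j - i).toNat = (j - 1 - i).toNat + 1 := by omega
        rw [hn1]
        exact h2
    · -- case i ≤ 0 : propagate downwards
      have hgrow : ∀ᶠ n : ℕ in atTop,
          1 ≤ ((a (i - 1 - (n : ℤ)) : ℤ)) - (b (i - 1 - ((n + 1 : ℕ) : ℤ)) : ℤ) := by
        have h1 : Tendsto (fun n : ℕ => i - 1 - (n : ℤ)) atTop atBot :=
          tendsto_atTop_atBot.mpr fun c => ⟨(i - 1 - c).toNat, fun n hn => by omega⟩
        have h2 := (ha.comp h1).eventually_ge_atTop 1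
        have h3 : ∀ᶠ n : ℕ in atTop, b (i - 1 - ((n + 1 : ℕ) : ℤ)) = 0 :=
          eventually_atTop.mpr ⟨(i - 2 + N).toNat, fun n hn => hbN _ (by omega)⟩
        filter_upwards [h2, h3] with n h2n h3n
        simp only [Function.comp_apply] at h2n
        omega
      obtain ⟨g, hg1, hg2, n₀, hg0⟩ :=
        aux_seq (fun n => b (i - 1 - (n : ℤ))) (fun n => a (i - 1 - (n : ℤ))) hgrow t
      simp only [Nat.cast_zero, sub_zero] at hg1
      set s : Finset ℤ := (Finset.range n₀).image (fun n : ℕ => i - 1 - (n : ℤ)) with hs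
      set x : ⨁ _i : ℤ, Tplus F :=
        DirectSum.mk (fun _ : ℤ => Tplus F) s (fun j => g (i - 1 - j.1).toNat) with hxdef
      have hx : ∀ j : ℤ, x j = if j ≤ i - 1 then g (i - 1 - j).toNat else 0 := by
        intro j
        by_cases hj : j ∈ s
        · rw [hxdef, DirectSum.mk_apply_of_mem hj]
          obtain ⟨n, hn, rfl⟩ := Finset.mem_image.mp hj
          rw [if_pos (by omega)]
        · rw [hxdef, DirectSum.mk_apply_of_notMem hj]
          symm
          split_ifs with h
          · apply hg0
            by_contra hlt
            push_neg at hlt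
            exact hj (Finset.mem_image.mpr
              ⟨(i - 1 - j).toNat, Finset.mem_range.mpr hlt, by omega⟩)
          · rfl
      refine ⟨x, by rw [hx 0, if_neg (by omega)], ?_⟩
      apply DFunLike.ext
      intro j
      rw [hD x j, hx j, hx (j - 1)]
      rcases lt_trichotomy i j with h | rfl | h
      · rw [if_neg (by omega), if_neg (by omega), smul_zero, smul_zero, add_zero,
          DirectSum.of_eq_of_ne _ _ _ (by omega)]
      · rw [if_neg (by omega), if_pos (by omega), smul_zero, zero_add, DirectSum.of_eq_same]
        have : (i - 1 - (i - 1)).toNat = 0 := by omega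
        rw [this]
        exact hg1
      · rw [if_pos (by omega), if_pos (by omega), DirectSum.of_eq_of_ne _ _ _ (by omega)]
        have h2 := hg2 (i - 1 - j).toNat
        have e1 : i - 1 - (((i - 1 - j).toNat + 1 : ℕ) : ℤ) = j - 1 := by omega
        have e2 : i - 1 - (((i - 1 - j).toNat : ℕ) : ℤ) = j := by omega
        rw [e1, e2] at h2
        have hn1 : (i - 1 - (j - 1)).toNat = (i - 1 - j).toNat + 1 := by omega
        rw [hn1]
        rw [add_comm] at h2
        exact h2
end
end

section
/- Let (a_i)_{i∈ℤ} and (b_i)_{i∈ℤ} be sequences of nonnegative integers such that: there is an integer N with a_i = 0 for all i ≥ N and b_i = 0 for all i ≤ −N; a_i → +∞ as i → −∞ and b_i → +∞ as i → +∞; (a_i) is non-increasing; (b_i) is non-decreasing; a_i ≤ b_i for i ≥ 0; and a_i ≥ b_i for i < 0. Let X = Y = ⊕_{i∈ℤ} T⁺ and let D : X → Y be the F[U]-module homomorphism whose i-th coordinate of D((x_j)_j) is U^{a_i}·x_i + U^{b_{i−1}}·x_{i−1}. If a_0 < b_{−1}, then there is an isomorphism of F[U]-modules ker(D) ≅ T⁺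 ⊕ (⊕_{n≥2} τ(b_{−n})) ⊕ (⊕_{n≥0} τ(a_n)). (Ungraded form of the second case of Lemma 3.4 of the paper.) -/
open Polynomial LaurentPolynomial DirectSum Filter

noncomputable section

/-- `τ(N)`: the kernel of multiplication by `U^N` on `T⁺`. -/
def tau (F : Type*) [Field F] (N : ℕ) : Submodule (Polynomial F) (Tplus F) :=
  LinearMap.ker (LinearMap.lsmul (Polynomial F) (Tplus F) ((X : Polynomial F) ^ N))

/-!
A vector `x` lies in `ker D` iff `U^{a_i} x_i = -U^{b_{i-1}} x_{i-1}` for all `i`. Choose heights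
`d_i` with `d_{-1} = 0` and `d_i + a_i = d_{i-1} + b_{i-1}`; they are natural numbers because
`a_i < b_{i-1}` for `i ≥ 0` and `b_{i-1} ≤ a_i` for `i < 0`, and they tend to infinity in both
directions. As every element of `T⁺` is killed by a power of `U`, the alternating vectors
`(±U^{d_i} t)_i` therefore have finite support, and they form a copy of `T⁺` inside `ker D` with
`t` in coordinate `-1`. Subtracting this tower through `x_{-1}` leaves a kernel element vanishing
at `-1`, and the kernel equations, read outwards from `-1`, give `U^{a_j} x_j = 0` for `j ≥ 0`
(as `a_{j-1} ≤ b_{j-1}`) and `U^{b_j} x_j = 0` for `j ≤ -2` (as `b_j ≤ a_j`). Conversely such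
single coordinates lie in `ker D`, and the coordinate `-1` separates the tower from them.
-/

lemma pow_smul_eq_zero_of_le {R M : Type*} [Monoid R] [AddMonoid M] [DistribMulAction R M]
    {r : R} {m n : ℕ} {x : M} (h : m ≤ n) (hx : r ^ m • x = 0) : r ^ n • x = 0 := by
  rw [← Nat.sub_add_cancel h, pow_add, mul_smul, hx, smul_zero]

lemma Tplus.isTorsion'_powers_X (F : Type*) [Field F] :
    Module.IsTorsion' (Tplus F) (Submonoid.powers (X : F[X])) := by
  refine (Submodule.isTorsion'_powers_iff _).2 fun t => ?_
  obtain ⟨f, rfl⟩ := Submodule.Quotient.mk_surjective _ t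
  obtain ⟨n, f', hf⟩ := f.exists_T_pow
  have hmul : (X : F[X]) ^ (n + 1) • f = f' • (T 1 : F[T;T⁻¹]) := by
    rw [Algebra.smul_def, Algebra.smul_def, algebraMap_eq_toLaurent, algebraMap_eq_toLaurent,
      toLaurent_X_pow, hf]
    push_cast [T_add]
    ring
  refine ⟨n + 1, ?_⟩
  rw [← Submodule.Quotient.mk_smul, Submodule.Quotient.mk_eq_zero, hmul]
  exact Submodule.smul_mem _ _ (Submodule.mem_span_singleton_self _)

namespace DirectSum

section SubtypeAlong

variable {R M ι κ : Type*} [Semiring R] [AddCommMonoid M] [Module R M] [DecidableEq ι]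
  [DecidableEq κ] (c : κ → ι) (p : κ → Submodule R M)

def subtypeAlong : (⨁ k, p k) →ₗ[R] ⨁ _ : ι, M :=
  toModule R κ _ fun k => (lof R ι (fun _ => M) (c k)).comp (p k).subtype

lemma subtypeAlong_of (k : κ) (v : p k) :
    subtypeAlong c p (of _ k v) = of (fun _ => M) (c k) v := by
  rw [← lof_eq_of R, subtypeAlong, toModule_lof]
  rfl

lemma subtypeAlong_apply_of_notMem_range {j : ι} (hj : j ∉ Set.range c) (u : ⨁ k, p k) :
    subtypeAlong c p u j = 0 := by
  induction u using DirectSum.induction_on with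
  | zero => simp
  | of k v => rw [subtypeAlong_of, of_eq_of_ne _ _ _ fun h => hj ⟨k, h.symm⟩]
  | add u v hu hv => rw [map_add, add_apply, hu, hv, add_zero]

lemma subtypeAlong_apply_self (hc : Function.Injective c) (u : ⨁ k, p k) (k : κ) :
    subtypeAlong c p u (c k) = u k := by
  induction u using DirectSum.induction_on with
  | zero => simp
  | of l v =>
    rcases eq_or_ne l k with rfl | hlk
    · simp [subtypeAlong_of]
    · rw [subtypeAlong_of, of_eq_of_ne _ _ _ (hc.ne hlk).symm, of_eq_of_ne _ _ _ hlk.symm,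
        ZeroMemClass.coe_zero]
  | add u v hu hv => rw [map_add, add_apply, hu, hv, add_apply, Submodule.coe_add]

lemma of_mem_range_subtypeAlong {k : κ} {j : ι} (hk : c k = j) {v : M} (hv : v ∈ p k) :
    of (fun _ => M) j v ∈ LinearMap.range (subtypeAlong c p) :=
  ⟨of _ k ⟨v, hv⟩, hk ▸ subtypeAlong_of c p k ⟨v, hv⟩⟩

end SubtypeAlong

section DiagSMul

variable {R M ι : Type*} [CommSemiring R] [AddCommMonoid M] [Module R M] [DecidableEq ι]

lemma mk_toFinset_apply {f : ι → M} (hf : {i | f i ≠ 0}.Finite) (i : ι) :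
    DirectSum.mk (fun _ => M) hf.toFinset (fun j => f j) i = f i := by
  by_cases hi : i ∈ hf.toFinset
  · exact mk_apply_of_mem hi
  · rw [mk_apply_of_notMem hi, eq_comm]
    simpa using hi

def diagSMul (c : ι → R) (hc : ∀ x : M, {i | c i • x ≠ 0}.Finite) :
    M →ₗ[R] ⨁ _ : ι, M where
  toFun x := DirectSum.mk _ (hc x).toFinset fun i => c i • x
  map_add' x y := by
    ext i
    rw [add_apply, mk_toFinset_apply, mk_toFinset_apply, mk_toFinset_apply, smul_add]
  map_smul' s x := by
    ext i
    simp only [mk_toFinset_apply, smul_apply, RingHom.id_apply, smul_comm (c i) s x]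

lemma diagSMul_apply (c : ι → R) (hc : ∀ x : M, {i | c i • x ≠ 0}.Finite) (x : M)
    (i : ι) :
    diagSMul c hc x i = c i • x :=
  mk_toFinset_apply (hc x) i

end DiagSMul

end DirectSum

namespace Zigzag

section Height

variable {a b : ℤ → ℕ}

-- At most one of the two sums is nonempty.
def height (a b : ℤ → ℕ) (i : ℤ) : ℕ :=
  (∑ k ∈ Finset.Ico 0 (i + 1), (b (k - 1) - a k)) +
    ∑ k ∈ Finset.Ico (i + 1) 0, (a k - b (k - 1))

lemma height_neg_one : height a b (-1) = 0 := by
  simp [height]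

lemma height_add (hpos : ∀ i, 0 ≤ i → a i ≤ b (i - 1)) (hneg : ∀ i < 0, b (i - 1) ≤ a i)
    (i : ℤ) : height a b i + a i = height a b (i - 1) + b (i - 1) := by
  rcases le_or_gt 0 i with hi | hi
  · have hI : Finset.Ico 0 (i + 1) = insert i (Finset.Ico 0 i) :=
      (Finset.insert_Ico_right_eq_Ico_add_one_of_not_isMax hi (not_isMax i)).symm
    simp only [height, sub_add_cancel, hI, Finset.sum_insert Finset.right_notMem_Ico,
      Finset.Ico_eq_empty_of_le (by omega : (0 : ℤ) ≤ i + 1),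
      Finset.Ico_eq_empty_of_le (by omega : (0 : ℤ) ≤ i), Finset.sum_empty]
    have := hpos i hi
    omega
  · have hI : Finset.Ico (i - 1 + 1) 0 = insert i (Finset.Ico (i + 1) 0) := by
      rw [sub_add_cancel, Finset.insert_Ico_add_one_left_eq_Ico hi]
    simp only [height, hI, Finset.sum_insert (by simp : i ∉ Finset.Ico (i + 1) 0),
      Finset.Ico_eq_empty_of_le (by omega : i + 1 ≤ 0),
      Finset.Ico_eq_empty_of_le (by omega : i - 1 + 1 ≤ 0), Finset.sum_empty]
    have := hneg i hi
    omega

lemma le_height_of_neg_one_le (hpos : ∀ i, 0 ≤ i → a i < b (i - 1)) {i : ℤ}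
    (hi : -1 ≤ i) :
    i + 1 ≤ height a b i := by
  have hsum := Finset.card_nsmul_le_sum (Finset.Ico 0 (i + 1)) (fun k => b (k - 1) - a k) 1
    fun k hk => Nat.sub_pos_of_lt (hpos k (Finset.mem_Ico.1 hk).1)
  rw [Int.card_Ico, smul_eq_mul, mul_one] at hsum
  have : height a b i = ∑ k ∈ Finset.Ico 0 (i + 1), (b (k - 1) - a k) := by
    simp [height, Finset.Ico_eq_empty_of_le (by omega : (0 : ℤ) ≤ i + 1)]
  omega

lemma sub_le_height_of_le_neg_two {i : ℤ} (hi : i ≤ -2) : a (i + 1) - b i ≤ height a b i := by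
  have hmem : i + 1 ∈ Finset.Ico (i + 1) 0 := Finset.mem_Ico.2 ⟨le_rfl, by omega⟩
  have := Finset.single_le_sum (f := fun k => a k - b (k - 1)) (fun _ _ => Nat.zero_le _) hmem
  simp only [add_sub_cancel_right] at this
  exact this.trans (Nat.le_add_left _ _)

lemma tendsto_height (ha : Tendsto a atBot atTop) (hb : Monotone b)
    (hpos : ∀ i, 0 ≤ i → a i < b (i - 1)) : Tendsto (height a b) cofinite atTop := by
  rw [Int.cofinite_eq, tendsto_sup]
  constructor
  · have hlow : Tendsto (fun i => a (i + 1) - b (-1)) atBot atTop :=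
      (tendsto_sub_atTop_nat _).comp (ha.comp (tendsto_atBot_add_const_right _ 1 tendsto_id))
    refine tendsto_atTop_mono' _ ?_ hlow
    filter_upwards [eventually_le_atBot (-2)] with i hi
    exact (Nat.sub_le_sub_left (hb (by omega)) _).trans (sub_le_height_of_le_neg_two hi)
  · refine tendsto_atTop_atTop.2 fun k => ⟨k, fun i hi => ?_⟩
    have := le_height_of_neg_one_le hpos (a := a) (b := b) (i := i) (by omega)
    omega

end Height

variable {R M : Type*} [CommRing R] [AddCommGroup M] [Module R M] (r : R) {a b : ℤ → ℕ}

-- The second summand precomposes with the shift `x ↦ (x (i - 1))ᵢ`.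
variable (M) in
def differential (r : R) (a b : ℤ → ℕ) : (⨁ _ : ℤ, M) →ₗ[R] ⨁ _ : ℤ, M :=
  DFinsupp.mapRange.linearMap (fun i => r ^ a i • LinearMap.id) +
    (DFinsupp.mapRange.linearMap fun i => r ^ b (i - 1) • LinearMap.id) ∘ₗ
      (lequivCongrLeft R (Equiv.addRight (1 : ℤ))).toLinearMap

lemma differential_apply (x : ⨁ _ : ℤ, M) (i : ℤ) :
    differential M r a b x i = r ^ a i • x i + r ^ b (i - 1) • x (i - 1) :=
  rfl

lemma differential_of {j : ℤ} {v : M} (ha : r ^ a j • v = 0) (hb : r ^ b j • v = 0) :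
    differential M r a b (of _ j v) = 0 := by
  ext i
  rw [differential_apply, DirectSum.zero_apply]
  by_cases hij : i = j
  · subst hij
    rw [of_eq_same, ha, of_eq_of_ne _ _ _ (by omega), smul_zero, add_zero]
  by_cases hij' : i - 1 = j
  · subst hij'
    rw [of_eq_same, hb, of_eq_of_ne _ _ _ hij, smul_zero, zero_add]
  · rw [of_eq_of_ne _ _ _ hij, of_eq_of_ne _ _ _ hij', smul_zero, smul_zero, add_zero]

lemma differential_comp_subtypeAlong {κ : Type*} [DecidableEq κ] (c : κ → ℤ)
    (p : κ → Submodule R M) (hp : ∀ k, p k ≤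
      Submodule.torsionBy R M (r ^ a (c k)) ⊓ Submodule.torsionBy R M (r ^ b (c k))) :
    differential M r a b ∘ₗ subtypeAlong c p = 0 := by
  refine DirectSum.linearMap_ext R fun k => LinearMap.ext fun v => ?_
  obtain ⟨hva, hvb⟩ := hp k v.2
  rw [LinearMap.comp_apply, LinearMap.comp_apply, lof_eq_of, subtypeAlong_of]
  exact differential_of r hva hvb

lemma pow_smul_apply_eq_zero_of_nonneg {x : ⨁ _ : ℤ, M} (hx : differential M r a b x = 0)
    (hx₀ : x (-1) = 0) (hab : ∀ i : ℤ, 0 ≤ i → a i ≤ b i) {i : ℤ} (hi : 0 ≤ i) :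
    r ^ a i • x i = 0 := by
  induction i, hi using Int.leInduction with
  | base => simpa [differential_apply, hx₀] using congr($hx 0)
  | succ i hi ih =>
    simpa [differential_apply, pow_smul_eq_zero_of_le (hab i hi) ih] using congr($hx (i + 1))

lemma pow_smul_apply_eq_zero_of_le_neg_two {x : ⨁ _ : ℤ, M} (hx : differential M r a b x = 0)
    (hx₀ : x (-1) = 0) (hab : ∀ i : ℤ, i < 0 → b i ≤ a i) {i : ℤ} (hi : i ≤ -2) :
    r ^ b i • x i = 0 := by
  induction i, hi using Int.leInductionDown with
  | base => simpa [differential_apply, hx₀] using congr($hx (-1))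
  | pred i hi ih =>
    simpa [differential_apply, pow_smul_eq_zero_of_le (hab i (by omega)) ih] using congr($hx i)

def towerCoeff (d : ℤ → ℕ) (i : ℤ) : R := ((i + 1).negOnePow : ℤ) * r ^ d i

lemma finite_towerCoeff_smul_ne_zero {d : ℤ → ℕ}
    (hM : Module.IsTorsion' M (Submonoid.powers r)) (hd : Tendsto d cofinite atTop) (x : M) :
    {i | towerCoeff r d i • x ≠ 0}.Finite := by
  obtain ⟨k, hk⟩ := (Submodule.isTorsion'_powers_iff r).1 hM x
  refine Filter.eventually_cofinite.1 ((hd.eventually_ge_atTop k).mono fun i hi => ?_)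
  rw [towerCoeff, mul_smul, pow_smul_eq_zero_of_le hi hk, smul_zero]

section Tower

variable {d : ℤ → ℕ} (hM : Module.IsTorsion' M (Submonoid.powers r))
  (hd : Tendsto d cofinite atTop)

def tower : M →ₗ[R] ⨁ _ : ℤ, M :=
  diagSMul (towerCoeff r d) (finite_towerCoeff_smul_ne_zero r hM hd)

lemma tower_apply_neg_one (hd₀ : d (-1) = 0) (x : M) : tower r hM hd x (-1) = x := by
  simp [tower, diagSMul_apply, towerCoeff, hd₀]

lemma differential_comp_tower (hrec : ∀ i, d i + a i = d (i - 1) + b (i - 1)) :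
    differential M r a b ∘ₗ tower r hM hd = 0 := by
  refine LinearMap.ext fun x => DFinsupp.ext fun i => ?_
  have hsign : (i - 1 + 1).negOnePow = -(i + 1).negOnePow := by
    rw [sub_add_cancel, Int.negOnePow_succ, neg_neg]
  have hcoeff : r ^ a i * towerCoeff r d i + r ^ b (i - 1) * towerCoeff r d (i - 1) = 0 := by
    simp only [towerCoeff, hsign, Units.val_neg, Int.cast_neg]
    linear_combination (((i + 1).negOnePow : ℤ) : R) * congr(r ^ $(hrec i))
  rw [LinearMap.comp_apply, differential_apply, tower, diagSMul_apply, diagSMul_apply, smul_smul,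
    smul_smul, ← add_smul, hcoeff, zero_smul, LinearMap.zero_apply, DirectSum.zero_apply]

variable (a b) in
def kernelParam : M × (⨁ n : ℕ, Submodule.torsionBy R M (r ^ b (-((n : ℤ) + 2)))) ×
    (⨁ n : ℕ, Submodule.torsionBy R M (r ^ a (n : ℤ))) →ₗ[R] ⨁ _ : ℤ, M :=
  (tower r hM hd).coprod ((subtypeAlong (fun n : ℕ => -((n : ℤ) + 2)) _).coprod
    (subtypeAlong (fun n : ℕ => (n : ℤ)) _))

lemma range_kernelParam_le (hrec : ∀ i, d i + a i = d (i - 1) + b (i - 1))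
    (hab₁ : ∀ i : ℤ, 0 ≤ i → a i ≤ b i) (hab₂ : ∀ i : ℤ, i < 0 → b i ≤ a i) :
    LinearMap.range (kernelParam r a b hM hd) ≤ LinearMap.ker (differential M r a b) := by
  have hleft (n : ℕ) : Submodule.torsionBy R M (r ^ b (-((n : ℤ) + 2))) ≤
      Submodule.torsionBy R M (r ^ a (-((n : ℤ) + 2))) ⊓
        Submodule.torsionBy R M (r ^ b (-((n : ℤ) + 2))) :=
    le_inf (Submodule.torsionBy_le_torsionBy_of_dvd _ _ (pow_dvd_pow r (hab₂ _ (by omega))))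
      le_rfl
  have hright (n : ℕ) : Submodule.torsionBy R M (r ^ a (n : ℤ)) ≤
      Submodule.torsionBy R M (r ^ a (n : ℤ)) ⊓ Submodule.torsionBy R M (r ^ b (n : ℤ)) :=
    le_inf le_rfl
      (Submodule.torsionBy_le_torsionBy_of_dvd _ _ (pow_dvd_pow r (hab₁ _ (by omega))))
  rw [LinearMap.range_le_ker_iff, kernelParam, LinearMap.comp_coprod, LinearMap.comp_coprod,
    differential_comp_tower r hM hd hrec, differential_comp_subtypeAlong r _ _ hleft,
    differential_comp_subtypeAlong r _ _ hright]
  ext <;> simp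

lemma ker_le_range_kernelParam (hd₀ : d (-1) = 0)
    (hrec : ∀ i, d i + a i = d (i - 1) + b (i - 1))
    (hab₁ : ∀ i : ℤ, 0 ≤ i → a i ≤ b i) (hab₂ : ∀ i : ℤ, i < 0 → b i ≤ a i) :
    LinearMap.ker (differential M r a b) ≤ LinearMap.range (kernelParam r a b hM hd) := by
  classical
  intro x hx
  rw [LinearMap.mem_ker] at hx
  set y := x - tower r hM hd (x (-1)) with hy_def
  have hy : differential M r a b y = 0 := by
    rw [map_sub, hx, ← LinearMap.comp_apply, differential_comp_tower r hM hd hrec,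
      LinearMap.zero_apply, sub_zero]
  have hy₀ : y (-1) = 0 := by
    rw [hy_def, DirectSum.sub_apply, tower_apply_neg_one r hM hd hd₀, sub_self]
  rw [kernelParam, LinearMap.range_coprod, LinearMap.range_coprod,
    show x = tower r hM hd (x (-1)) + y by rw [hy_def, add_sub_cancel]]
  refine Submodule.add_mem_sup (LinearMap.mem_range_self _ _) ?_
  rw [← sum_support_of y]
  refine Submodule.sum_mem _ fun j _ => ?_
  rcases lt_trichotomy j (-1) with hj | rfl | hj
  · refine Submodule.mem_sup_left
      (of_mem_range_subtypeAlong _ _ (k := (-(j + 2)).toNat) (by omega) ?_)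
    rw [Submodule.mem_torsionBy_iff, show -(((-(j + 2)).toNat : ℕ) + 2 : ℤ) = j by omega]
    exact pow_smul_apply_eq_zero_of_le_neg_two r hy hy₀ hab₂ (by omega)
  · rw [hy₀, map_zero]
    exact Submodule.zero_mem _
  · refine Submodule.mem_sup_right (of_mem_range_subtypeAlong _ _ (k := j.toNat) (by omega) ?_)
    rw [Submodule.mem_torsionBy_iff, show ((j.toNat : ℕ) : ℤ) = j by omega]
    exact pow_smul_apply_eq_zero_of_nonneg r hy hy₀ hab₁ (by omega)

lemma kernelParam_injective (hd₀ : d (-1) = 0) :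
    Function.Injective (kernelParam r a b hM hd) := by
  set cb : ℕ → ℤ := fun n => -((n : ℤ) + 2)
  set ca : ℕ → ℤ := fun n => (n : ℤ)
  have hcb : Function.Injective cb := fun m n h => by simp only [cb] at h; omega
  have hca : Function.Injective ca := fun m n h => by simp only [ca] at h; omega
  have hcb_range {j : ℤ} (hj : -2 < j) : j ∉ Set.range cb := by
    rintro ⟨n, rfl⟩
    simp only [cb] at hj
    omega
  have hca_range {j : ℤ} (hj : j < 0) : j ∉ Set.range ca := by
    rintro ⟨n, rfl⟩
    simp only [ca] at hj
    omega
  rw [← LinearMap.ker_eq_bot, Submodule.eq_bot_iff]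
  rintro ⟨t, v, u⟩ h
  have hcoord (j : ℤ) :
      tower r hM hd t j + (subtypeAlong cb _ v j + subtypeAlong ca _ u j) = 0 :=
    congr($(LinearMap.mem_ker.1 h) j)
  have ht : t = 0 := by
    simpa [subtypeAlong_apply_of_notMem_range _ _ (hcb_range (j := -1) (by omega)),
      subtypeAlong_apply_of_notMem_range _ _ (hca_range (j := -1) (by omega)),
      tower_apply_neg_one r hM hd hd₀] using hcoord (-1)
  have hv : v = 0 := by
    ext n
    have := hcoord (cb n)
    rwa [ht, map_zero, DirectSum.zero_apply, zero_add, subtypeAlong_apply_self _ _ hcb,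
      subtypeAlong_apply_of_notMem_range _ _ (hca_range (by simp only [cb]; omega)),
      add_zero] at this
  have hu : u = 0 := by
    ext n
    have := hcoord (ca n)
    rwa [ht, map_zero, DirectSum.zero_apply, zero_add, subtypeAlong_apply_self _ _ hca,
      subtypeAlong_apply_of_notMem_range _ _ (hcb_range (by simp only [ca]; omega)),
      zero_add] at this
  rw [ht, hv, hu]
  rfl

end Tower

theorem nonempty_ker_differential_equiv {d : ℤ → ℕ}
    (hM : Module.IsTorsion' M (Submonoid.powers r)) (hd : Tendsto d cofinite atTop)
    (hd₀ : d (-1) = 0) (hrec : ∀ i, d i + a i = d (i - 1) + b (i - 1))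
    (hab₁ : ∀ i : ℤ, 0 ≤ i → a i ≤ b i) (hab₂ : ∀ i : ℤ, i < 0 → b i ≤ a i) :
    Nonempty (LinearMap.ker (differential M r a b) ≃ₗ[R]
      M × (⨁ n : ℕ, Submodule.torsionBy R M (r ^ b (-((n : ℤ) + 2)))) ×
        (⨁ n : ℕ, Submodule.torsionBy R M (r ^ a (n : ℤ)))) :=
  ⟨(LinearEquiv.ofEq _ _ (le_antisymm (ker_le_range_kernelParam r hM hd hd₀ hrec hab₁ hab₂)
    (range_kernelParam_le r hM hd hrec hab₁ hab₂))).trans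
      (LinearEquiv.ofInjective _ (kernelParam_injective r hM hd hd₀)).symm⟩

end Zigzag

theorem stmt_2_general (F : Type*) [Field F] (a b : ℤ → ℕ)
    (ha : Tendsto a atBot atTop)
    (hamono : Antitone a) (hbmono : Monotone b)
    (hab₁ : ∀ i : ℤ, 0 ≤ i → a i ≤ b i) (hab₂ : ∀ i : ℤ, i < 0 → b i ≤ a i)
    (h₀ : a 0 < b (-1))
    (D : (⨁ _i : ℤ, Tplus F) →ₗ[Polynomial F] (⨁ _i : ℤ, Tplus F))
    (hD : ∀ (x : ⨁ _i : ℤ, Tplus F) (i : ℤ),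
      D x i = (X : Polynomial F) ^ (a i) • x i + (X : Polynomial F) ^ (b (i - 1)) • x (i - 1)) :
    Nonempty ((LinearMap.ker D) ≃ₗ[Polynomial F]
      (Tplus F × (⨁ n : ℕ, tau F (b (-((n : ℤ) + 2)))) × (⨁ n : ℕ, tau F (a (n : ℤ))))) := by
  have hpos : ∀ i, 0 ≤ i → a i < b (i - 1) := fun i hi =>
    (hamono hi).trans_lt (h₀.trans_le (hbmono (by omega)))
  have hneg : ∀ i < 0, b (i - 1) ≤ a i := fun i hi =>
    (hbmono (by omega)).trans ((hab₂ (-1) (by norm_num)).trans (hamono (by omega)))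
  obtain rfl : D = Zigzag.differential (Tplus F) X a b := LinearMap.ext fun x => DFinsupp.ext (hD x)
  exact Zigzag.nonempty_ker_differential_equiv X (Tplus.isTorsion'_powers_X F)
    (Zigzag.tendsto_height ha hbmono hpos) Zigzag.height_neg_one
    (Zigzag.height_add (fun i hi => (hpos i hi).le) hneg)
    hab₁ hab₂

/-- Lemma 3.4, second case (`a₀ < b₋₁`), ungraded form:
`ker D ≅ T⁺ ⊕ (⊕_{n ≥ 2} τ(b₋ₙ)) ⊕ (⊕_{n ≥ 0} τ(aₙ))`. -/
theorem stmt_2 (F : Type*) [Field F] (a b : ℤ → ℕ)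
    (hvanish : ∃ N : ℤ, (∀ i, N ≤ i → a i = 0) ∧ (∀ i, i ≤ -N → b i = 0))
    (ha : Tendsto a atBot atTop) (hb : Tendsto b atTop atTop)
    (hamono : Antitone a) (hbmono : Monotone b)
    (hab₁ : ∀ i : ℤ, 0 ≤ i → a i ≤ b i) (hab₂ : ∀ i : ℤ, i < 0 → b i ≤ a i)
    (h₀ : a 0 < b (-1))
    (D : (⨁ _i : ℤ, Tplus F) →ₗ[Polynomial F] (⨁ _i : ℤ, Tplus F))
    (hD : ∀ (x : ⨁ _i : ℤ, Tplus F) (i : ℤ),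
      D x i = (X : Polynomial F) ^ (a i) • x i + (X : Polynomial F) ^ (b (i - 1)) • x (i - 1)) :
    Nonempty ((LinearMap.ker D) ≃ₗ[Polynomial F]
      (Tplus F × (⨁ n : ℕ, tau F (b (-((n : ℤ) + 2)))) × (⨁ n : ℕ, tau F (a (n : ℤ))))) :=
  stmt_2_general F a b ha hamono hbmono hab₁ hab₂ h₀ D hD
end
end

section
/- Let (a_i)_{i∈ℤ} and (b_i)_{i∈ℤ} be sequences of nonnegative integers such that: there is an integer N with a_i = 0 for all i ≥ N and b_i = 0 for all i ≤ −N; a_i → +∞ as i → −∞ and b_i → +∞ as i → +∞; a_i ≥ b_i for i < 0; and a_i ≤ b_i for i ≥ 0. Let X = Y = ⊕_{i∈ℤ} T⁺ and let D : X → Y be the F[U]-module homomorphism whose j-th coordinate of D((x_i)_i) is U^{a_j}·x_j + U^{b_{j+1}}·x_{j+1} (so the off-diagonal maps go from the (i)-th summand to the (i−1)-st summand). Then no nonzero element of Y supported only in the (−1)-st summand lies in the image of D, and the composite of the inclusion of the (−1)-st summand T⁺ → Y with the quotient map Y → Y/im(D) is an isomorphism of F[U]-modules; in particular coker(D) ≅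 T⁺. (Cokernel part of Lemma 3.9 of the paper.) -/
/-!
Every summand of `Y` other than the `(-1)`-st is congruent modulo `im D` to its neighbour
towards `-1`, because `U` acts surjectively on `T⁺`; so the `(-1)`-st summand surjects onto
`coker D`. For injectivity, choose exponents `n_j ≥ 0` with `n_{-1} = 0` and
`n_j + a_j = n_{j-1} + b_j` (possible exactly because `a_j ≥ b_j` for `j < 0` and `a_j ≤ b_j`
for `j ≥ 0`). Then `y ↦ ∑_j (-1)^(j+1) U^{n_j} y_j` vanishes on `im D` and is the identity on
the `(-1)`-st summand.
-/

open Polynomial LaurentPolynomial DirectSum Filter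

noncomputable section

theorem Tplus.X_pow_smul_surjective (F : Type*) [Field F] (k : ℕ) :
    Function.Surjective ((X : F[X]) ^ k • · : Tplus F → Tplus F) := by
  intro t
  obtain ⟨q, rfl⟩ := Submodule.Quotient.mk_surjective _ t
  refine ⟨Submodule.Quotient.mk (T (-k) * q), ?_⟩
  dsimp only
  rw [← Submodule.Quotient.mk_smul, Algebra.smul_def, algebraMap_X_pow, ← mul_assoc, ← T_add,
    add_neg_cancel, T_zero, one_mul]

theorem Submodule.mkQ_comp_injective_of_le_ker {R M N : Type*} [Ring R] [AddCommGroup M]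
    [Module R M] [AddCommGroup N] [Module R N] {P : Submodule R N} (ι : M →ₗ[R] N)
    (φ : N →ₗ[R] M) (hφι : φ ∘ₗ ι = LinearMap.id) (hP : P ≤ LinearMap.ker φ) :
    Function.Injective (P.mkQ ∘ₗ ι) := by
  rw [← LinearMap.ker_eq_bot, LinearMap.ker_eq_bot']
  intro x hx
  rw [LinearMap.comp_apply, Submodule.mkQ_apply, Submodule.Quotient.mk_eq_zero] at hx
  have := hP hx
  rwa [LinearMap.mem_ker, ← LinearMap.comp_apply, hφι, LinearMap.id_apply] at this

theorem DirectSum.eq_zero_of_injective_mkQ_comp_lof {R ι : Type*} [Ring R] [DecidableEq ι]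
    {M : ι → Type*} [∀ i, AddCommGroup (M i)] [∀ i, Module R (M i)] {P : Submodule R (⨁ i, M i)}
    {i₀ : ι} (hinj : Function.Injective (P.mkQ ∘ₗ lof R ι M i₀)) {y : ⨁ i, M i} (hy : y ∈ P)
    (hsupp : ∀ i, i ≠ i₀ → y i = 0) : y = 0 := by
  have hy₀ : y = lof R ι M i₀ (y i₀) := by
    ext i
    rcases eq_or_ne i i₀ with rfl | hi
    · rw [lof_apply]
    · rw [hsupp i hi, lof_eq_of, of_eq_of_ne _ _ _ hi]
  have : y i₀ = 0 := hinj <| by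
    simpa [Submodule.Quotient.mk_eq_zero, ← hy₀] using hy
  rw [hy₀, this, map_zero]

section Zigzag

variable {R M : Type*} [Ring R] [AddCommGroup M] [Module R M]

local notation "lof" => DirectSum.lof R ℤ (fun _ => M)

def IsZigzag (α β : ℤ → R) (D : (⨁ _ : ℤ, M) →ₗ[R] ⨁ _ : ℤ, M) : Prop :=
  ∀ x j, D x j = α j • x j + β (j + 1) • x (j + 1)

namespace IsZigzag

variable {α β : ℤ → R} {D : (⨁ _ : ℤ, M) →ₗ[R] ⨁ _ : ℤ, M}

theorem apply_lof (hD : IsZigzag α β D) (i : ℤ) (x : M) :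
    D (lof i x) = lof i (α i • x) + lof (i - 1) (β i • x) := by
  ext j
  rw [hD, DirectSum.add_apply]
  simp only [lof_eq_of, of_apply]
  split_ifs <;> first | omega | (subst_vars; simp)

theorem sup_range_lof_eq_top (hD : IsZigzag α β D)
    (hα : ∀ j, Function.Surjective (α j • · : M → M))
    (hβ : ∀ j, Function.Surjective (β j • · : M → M)) (i₀ : ℤ) :
    LinearMap.range D ⊔ LinearMap.range (lof i₀) = ⊤ := by
  set S := LinearMap.range D ⊔ LinearMap.range (lof i₀)
  have hD_mem (i : ℤ) (w : M) : lof i (α i • w) + lof (i - 1) (β i • w) ∈ S :=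
    hD.apply_lof i w ▸ Submodule.mem_sup_left (LinearMap.mem_range_self D _)
  have hlof (i : ℤ) : ∀ x, lof i x ∈ S := by
    induction i using Int.inductionOn' (b := i₀) with
    | zero => exact fun x => Submodule.mem_sup_right ⟨x, rfl⟩
    | succ k _ ih =>
      intro x
      obtain ⟨w, rfl⟩ := hα (k + 1) x
      simpa using sub_mem (hD_mem (k + 1) w) (ih (β (k + 1) • w))
    | pred k _ ih =>
      intro x
      obtain ⟨w, rfl⟩ := hβ k x
      simpa using sub_mem (hD_mem k w) (ih (α k • w))
  refine Submodule.eq_top_iff'.2 fun y => ?_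
  induction y using DirectSum.induction_on with
  | zero => exact zero_mem S
  | of i x => exact hlof i x
  | add y z hy hz => exact add_mem hy hz

theorem mkQ_comp_lof_surjective (hD : IsZigzag α β D)
    (hα : ∀ j, Function.Surjective (α j • · : M → M))
    (hβ : ∀ j, Function.Surjective (β j • · : M → M)) (i₀ : ℤ) :
    Function.Surjective ((LinearMap.range D).mkQ ∘ₗ lof i₀) := by
  rw [← LinearMap.range_eq_top, LinearMap.range_comp, Submodule.map_mkQ_eq_top]
  exact hD.sup_range_lof_eq_top hα hβ i₀

end IsZigzag

end Zigzag

theorem IsZigzag.mkQ_comp_lof_injective {R M : Type*} [CommRing R] [AddCommGroup M] [Module R M]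
    {α β : ℤ → R} {D : (⨁ _ : ℤ, M) →ₗ[R] ⨁ _ : ℤ, M} (hD : IsZigzag α β D) {i₀ : ℤ}
    (c : ℤ → R) (hc : ∀ j, c j * α j + c (j - 1) * β j = 0) (hc₀ : c i₀ = 1) :
    Function.Injective ((LinearMap.range D).mkQ ∘ₗ lof R ℤ (fun _ => M) i₀) := by
  set φ := toModule R ℤ M fun j => c j • LinearMap.id
  have hφ (j : ℤ) (x : M) : φ (lof R ℤ (fun _ => M) j x) = c j • x := by simp [φ]
  refine Submodule.mkQ_comp_injective_of_le_ker _ φ (LinearMap.ext fun x => by simp [hφ, hc₀]) ?_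
  rintro _ ⟨x, rfl⟩
  suffices φ ∘ₗ D = 0 from LinearMap.congr_fun this x
  refine DirectSum.linearMap_ext R fun i => LinearMap.ext fun w => ?_
  simp only [LinearMap.comp_apply, LinearMap.zero_apply]
  rw [hD.apply_lof, map_add, hφ, hφ, smul_smul, smul_smul, ← add_smul, hc, zero_smul]

-- The exponents `n_j` of the header; under the hypotheses of `cokernelExponent_add` the
-- truncated subtractions never truncate.
def cokernelExponent (a b : ℤ → ℕ) (j : ℤ) : ℕ :=
  j.inductionOn' (motive := fun _ => ℕ) (-1) 0 (fun k _ n => n + b (k + 1) - a (k + 1))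
    (fun k _ n => n + a k - b k)

theorem cokernelExponent_neg_one (a b : ℤ → ℕ) : cokernelExponent a b (-1) = 0 :=
  Int.inductionOn'_self

theorem cokernelExponent_add (a b : ℤ → ℕ) (hab₁ : ∀ i : ℤ, i < 0 → b i ≤ a i)
    (hab₂ : ∀ i : ℤ, 0 ≤ i → a i ≤ b i) (j : ℤ) :
    cokernelExponent a b j + a j = cokernelExponent a b (j - 1) + b j := by
  rcases lt_or_ge j 0 with hj | hj
  · have := hab₁ j hj
    simp only [cokernelExponent, Int.inductionOn'_sub_one (show j ≤ -1 by omega)]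
    omega
  · obtain ⟨k, hk, rfl⟩ : ∃ k, -1 ≤ k ∧ j = k + 1 := ⟨j - 1, by omega, by omega⟩
    have := hab₂ (k + 1) hj
    simp only [cokernelExponent, Int.inductionOn'_add_one hk, add_sub_cancel_right]
    omega

theorem stmt_3_general (F : Type*) [Field F] (a b : ℤ → ℕ)
    (hab₁ : ∀ i : ℤ, i < 0 → b i ≤ a i) (hab₂ : ∀ i : ℤ, 0 ≤ i → a i ≤ b i)
    (D : (⨁ _i : ℤ, Tplus F) →ₗ[Polynomial F] (⨁ _i : ℤ, Tplus F))
    (hD : ∀ (x : ⨁ _i : ℤ, Tplus F) (j : ℤ),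
      D x j = (X : Polynomial F) ^ (a j) • x j + (X : Polynomial F) ^ (b (j + 1)) • x (j + 1)) :
    (∀ y : ⨁ _i : ℤ, Tplus F, y ∈ LinearMap.range D → (∀ i : ℤ, i ≠ -1 → y i = 0) → y = 0) ∧
    Function.Bijective
      ((Submodule.mkQ (R := Polynomial F) (M := ⨁ _i : ℤ, Tplus F) (LinearMap.range D)).comp (DirectSum.lof (Polynomial F) ℤ (fun _ => Tplus F) (-1))) := by
  have hzig : IsZigzag (fun j => (X : F[X]) ^ a j) (fun j => X ^ b j) D := hD
  have hinj := hzig.mkQ_comp_lof_injective (i₀ := -1)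
    (fun j => ((j + 1).negOnePow : F[X]) * X ^ cokernelExponent a b j)
    (fun j => by
      simp only [mul_assoc, ← pow_add, cokernelExponent_add a b hab₁ hab₂ j, Int.negOnePow_succ,
        sub_add_cancel]
      simp)
    (by simp [cokernelExponent_neg_one])
  exact ⟨fun y hy hsupp => eq_zero_of_injective_mkQ_comp_lof hinj hy hsupp, hinj,
    hzig.mkQ_comp_lof_surjective (fun j => Tplus.X_pow_smul_surjective F (a j))
      (fun j => Tplus.X_pow_smul_surjective F (b j)) (-1)⟩

/-- Lemma 3.9, cokernel part: no nonzero element of `Y` supported only in the `(-1)`-st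
summand lies in the image of `D`, and the composite of the inclusion of the `(-1)`-st
summand with the quotient map `Y → Y/im D` is an isomorphism; so `coker D ≅ T⁺`. -/
theorem stmt_3 (F : Type*) [Field F] (a b : ℤ → ℕ)
    (hvanish : ∃ N : ℤ, (∀ i, N ≤ i → a i = 0) ∧ (∀ i, i ≤ -N → b i = 0))
    (ha : Tendsto a atBot atTop) (hb : Tendsto b atTop atTop)
    (hab₁ : ∀ i : ℤ, i < 0 → b i ≤ a i) (hab₂ : ∀ i : ℤ, 0 ≤ i → a i ≤ b i)
    (D : (⨁ _i : ℤ, Tplus F) →ₗ[Polynomial F] (⨁ _i : ℤ, Tplus F))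
    (hD : ∀ (x : ⨁ _i : ℤ, Tplus F) (j : ℤ),
      D x j = (X : Polynomial F) ^ (a j) • x j + (X : Polynomial F) ^ (b (j + 1)) • x (j + 1)) :
    (∀ y : ⨁ _i : ℤ, Tplus F, y ∈ LinearMap.range D → (∀ i : ℤ, i ≠ -1 → y i = 0) → y = 0) ∧
    Function.Bijective
      ((Submodule.mkQ (R := Polynomial F) (M := ⨁ _i : ℤ, Tplus F) (LinearMap.range D)).comp (DirectSum.lof (Polynomial F) ℤ (fun _ => Tplus F) (-1))) :=
  stmt_3_general F a b hab₁ hab₂ D hD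
end
end

section
/- Let (a_i)_{i∈ℤ} and (b_i)_{i∈ℤ} be sequences of nonnegative integers such that: there is an integer N with a_i = 0 for all i ≥ N and b_i = 0 for all i ≤ −N; a_i → +∞ as i → −∞ and b_i → +∞ as i → +∞; a_i ≥ b_i for i < 0; and a_i ≤ b_i for i ≥ 0. Let X = Y = ⊕_{i∈ℤ} T⁺ and let D : X → Y be the F[U]-module homomorphism whose j-th coordinate of D((x_i)_i) is U^{a_j}·x_j + U^{b_{j+1}}·x_{j+1}. Then there is an isomorphism of F[U]-modules ker(D) ≅ ⊕_{i∈ℤ} τ(min(a_i, b_i)). (Kernel part of Lemma 3.9 of the paper.) -/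
/-!
For `x ∈ ker D` we have `U^{a_j} x_j = -U^{b_{j+1}} x_{j+1}`. Since `x` has finite support,
descending induction from the right, using `a_{j+1} ≤ b_{j+1}` for `j + 1 ≥ 0`, gives
`U^{a_j} x_j = 0` for `j ≥ 0`, and ascending induction from the left, using `b ≤ a` on the
negatives, gives `U^{b_j} x_j = 0` for `j ≤ 0`. So `x ∈ ker D` exactly when
`x_j ∈ τ(min(a_j, b_j))` for every `j`, and `ker D` is the image of `⊕ τ(min(aᵢ, bᵢ))` under the
coordinatewise inclusion.
-/

open Polynomial LaurentPolynomial DirectSum Filter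

noncomputable section

theorem Int.forall_ge_of_eventually_atTop {P : ℤ → Prop} {c : ℤ} (hev : ∀ᶠ j in atTop, P j)
    (hstep : ∀ j, c ≤ j → P (j + 1) → P j) (j : ℤ) (hj : c ≤ j) : P j := by
  obtain ⟨m, hm⟩ := eventually_atTop.1 hev
  have hbelow : ∀ n ≤ max m j, c ≤ n → P n := by
    intro n hn
    induction n, hn using Int.leInductionDown with
    | base => exact fun _ => hm _ (le_max_left _ _)
    | pred n _ ih => exact fun hc => hstep _ hc (by simpa using ih (by omega))
  exact hbelow j (le_max_right _ _) hj

theorem Int.forall_le_of_eventually_atBot {P : ℤ → Prop} {c : ℤ} (hev : ∀ᶠ j in atBot, P j)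
    (hstep : ∀ j, j ≤ c → P (j - 1) → P j) (j : ℤ) (hj : j ≤ c) : P j := by
  simpa using Int.forall_ge_of_eventually_atTop (P := fun j => P (-j)) (c := -c)
    (tendsto_neg_atTop_atBot.eventually hev)
    (fun j hj h => hstep (-j) (by omega) (by simpa [sub_eq_add_neg, add_comm] using h)) (-j)
    (by omega)

namespace DirectSum

variable {ι R : Type*} {M : ι → Type*} [∀ i, AddCommMonoid (M i)]

theorem eventually_cofinite_eq_zero (x : ⨁ i, M i) : ∀ᶠ i in cofinite, x i = 0 := by
  classical
  exact x.support.eventually_cofinite_notMem.mono fun _ => DFinsupp.notMem_support_iff.mp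

variable [Semiring R] [∀ i, Module R (M i)]

theorem mem_range_lmap_subtype (p : ∀ i, Submodule R (M i)) (x : ⨁ i, M i) :
    x ∈ LinearMap.range (lmap fun i => (p i).subtype) ↔ ∀ i, x i ∈ p i := by
  simp [range_lmap]

def equivOfMemIff (S : Submodule R (⨁ i, M i)) (p : ∀ i, Submodule R (M i))
    (hS : ∀ x, x ∈ S ↔ ∀ i, x i ∈ p i) : S ≃ₗ[R] ⨁ i, p i :=
  (LinearEquiv.ofEq S _
      (Submodule.ext fun x => (hS x).trans (mem_range_lmap_subtype p x).symm)).trans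
    (LinearEquiv.ofInjective _ ((lmap_injective _).2 fun i => (p i).injective_subtype)).symm

end DirectSum

section PowSmul

variable {R M : Type*} [Monoid R] [AddCommMonoid M] [DistribMulAction R M] {r : R}

theorem pow_smul_eq_zero_of_le_s4 {m : M} {n k : ℕ} (h : r ^ n • m = 0) (hnk : n ≤ k) :
    r ^ k • m = 0 := by
  rw [← Nat.sub_add_cancel hnk, pow_add, mul_smul, h, smul_zero]

theorem forall_pow_smul_add_pow_smul_succ_eq_zero_iff {a b : ℤ → ℕ}
    (hab₁ : ∀ i : ℤ, i < 0 → b i ≤ a i) (hab₂ : ∀ i : ℤ, 0 ≤ i → a i ≤ b i) (x : ⨁ _i : ℤ, M) :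
    (∀ j, r ^ a j • x j + r ^ b (j + 1) • x (j + 1) = 0) ↔
      ∀ j, r ^ min (a j) (b j) • x j = 0 := by
  constructor
  · intro hx
    obtain ⟨hbot, htop⟩ := eventually_sup.1 (Int.cofinite_eq ▸ eventually_cofinite_eq_zero x)
    have hpos : ∀ j, 0 ≤ j → r ^ a j • x j = 0 :=
      Int.forall_ge_of_eventually_atTop (htop.mono fun j hj => by rw [hj, smul_zero])
        fun j hj h => by simpa [pow_smul_eq_zero_of_le_s4 h (hab₂ _ (by omega))] using hx j
    have hneg : ∀ j, j ≤ 0 → r ^ b j • x j = 0 :=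
      Int.forall_le_of_eventually_atBot (hbot.mono fun j hj => by rw [hj, smul_zero])
        fun j hj h => by simpa [pow_smul_eq_zero_of_le_s4 h (hab₁ _ (by omega))] using hx (j - 1)
    intro j
    rcases le_or_gt 0 j with hj | hj
    · rw [min_eq_left (hab₂ j hj)]
      exact hpos j hj
    · rw [min_eq_right (hab₁ j hj)]
      exact hneg j hj.le
  · intro hx j
    rw [pow_smul_eq_zero_of_le_s4 (hx j) (min_le_left _ _),
      pow_smul_eq_zero_of_le_s4 (hx (j + 1)) (min_le_right _ _), add_zero]

end PowSmul

theorem stmt_4_general (F : Type*) [Field F] (a b : ℤ → ℕ)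
    (hab₁ : ∀ i : ℤ, i < 0 → b i ≤ a i) (hab₂ : ∀ i : ℤ, 0 ≤ i → a i ≤ b i)
    (D : (⨁ _i : ℤ, Tplus F) →ₗ[Polynomial F] (⨁ _i : ℤ, Tplus F))
    (hD : ∀ (x : ⨁ _i : ℤ, Tplus F) (j : ℤ),
      D x j = (X : Polynomial F) ^ (a j) • x j + (X : Polynomial F) ^ (b (j + 1)) • x (j + 1)) :
    Nonempty ((LinearMap.ker D) ≃ₗ[Polynomial F] (⨁ i : ℤ, tau F (min (a i) (b i)))) := by
  refine ⟨DirectSum.equivOfMemIff _ _ fun x => ?_⟩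
  rw [LinearMap.mem_ker, DFinsupp.ext_iff]
  simp only [hD, tau, LinearMap.mem_ker, LinearMap.lsmul_apply]
  exact forall_pow_smul_add_pow_smul_succ_eq_zero_iff (r := X) hab₁ hab₂ x

/-- Lemma 3.9, kernel part: `ker D ≅ ⊕_{i ∈ ℤ} τ(min(aᵢ, bᵢ))`. -/
theorem stmt_4 (F : Type*) [Field F] (a b : ℤ → ℕ)
    (hvanish : ∃ N : ℤ, (∀ i, N ≤ i → a i = 0) ∧ (∀ i, i ≤ -N → b i = 0))
    (ha : Tendsto a atBot atTop) (hb : Tendsto b atTop atTop)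
    (hab₁ : ∀ i : ℤ, i < 0 → b i ≤ a i) (hab₂ : ∀ i : ℤ, 0 ≤ i → a i ≤ b i)
    (D : (⨁ _i : ℤ, Tplus F) →ₗ[Polynomial F] (⨁ _i : ℤ, Tplus F))
    (hD : ∀ (x : ⨁ _i : ℤ, Tplus F) (j : ℤ),
      D x j = (X : Polynomial F) ^ (a j) • x j + (X : Polynomial F) ^ (b (j + 1)) • x (j + 1)) :
    Nonempty ((LinearMap.ker D) ≃ₗ[Polynomial F] (⨁ i : ℤ, tau F (min (a i) (b i)))) :=
  stmt_4_general F a b hab₁ hab₂ D hD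
end
end

section
/- Let g ≥ 1 be an integer and let t : ℕ → ℤ be a sequence such that t_i = 0 for all i ≥ g, t_{g−1} ≠ 0, and there is no index i with i + 2 ≤ g and t_i = t_{i+1} = t_{i+2} = 0. Then ∑_{i≥0} |t_i| ≥ ⌊(g−1)/3⌋ + 1. (This is the combinatorial claim proved inside Lemma 4.5 of the paper: grouping the torsion coefficients into consecutive triples (t_{3k}, t_{3k+1}, t_{3k+2}), each triple with smallest index at most g−1 contributes at least 1 to the sum, yielding the genus bound g(K) ≤ 3c(Y) for alternating knots.) -/
/-- Combinatorial claim from Lemma 4.5: if `t` vanishes from index `g` on, `t_{g-1} ≠ 0`,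
and there is no triple of consecutive zeroes `t_i = t_{i+1} = t_{i+2} = 0` with `i + 2 ≤ g`,
then `∑_{i ≥ 0} |t_i| ≥ ⌊(g-1)/3⌋ + 1`. -/
theorem stmt_8 (g : ℕ) (hg : 1 ≤ g) (t : ℕ → ℤ)
    (hvanish : ∀ i, g ≤ i → t i = 0) (htop : t (g - 1) ≠ 0)
    (hno : ¬ ∃ i : ℕ, i + 2 ≤ g ∧ t i = 0 ∧ t (i + 1) = 0 ∧ t (i + 2) = 0) :
    ((((g - 1) / 3 + 1 : ℕ) : ℤ)) ≤ ∑ᶠ i : ℕ, |t i| := by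
  push_neg at hno
  set m := (g - 1) / 3 + 1 with hm
  have hsum : ∑ᶠ i : ℕ, |t i| = ∑ i ∈ Finset.range g, |t i| := by
    apply finsum_eq_sum_of_support_subset
    intro x hx
    simp only [Function.mem_support] at hx
    simp only [Finset.coe_range, Set.mem_Iio]
    by_contra h
    exact hx (by rw [hvanish x (by omega)]; simp)
  -- choice function
  set f : ℕ → ℕ := fun k => if t (3*k) ≠ 0 then 3*k else if t (3*k+1) ≠ 0 then 3*k+1 else 3*k+2
    with hf
  have key : ∀ k < m, t (f k) ≠ 0 ∧ 3*k ≤ f k ∧ f k ≤ 3*k+2 := by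
    intro k hk
    have h3k : 3*k ≤ g - 1 := by
      have := Nat.lt_succ_iff.mp hk
      omega
    simp only [hf]
    by_cases h0 : t (3*k) ≠ 0
    · rw [if_pos h0]; exact ⟨h0, by omega, by omega⟩
    · push_neg at h0
      by_cases h1 : t (3*k+1) ≠ 0
      · rw [if_neg (not_not.mpr h0), if_pos h1]
        exact ⟨h1, by omega, by omega⟩
      · push_neg at h1
        rw [if_neg (not_not.mpr h0), if_neg (not_not.mpr h1)]
        refine ⟨?_, by omega, by omega⟩
        by_cases hle : 3*k + 2 ≤ g
        · exact hno (3*k) hle h0 h1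
        · -- 3*k+2 > g, so 3*k = g-1 or 3*k+1 = g-1
          exfalso
          rcases Nat.lt_or_ge (3*k) (g-1) with h | h
          · have : 3*k + 1 = g - 1 := by omega
            exact htop (this ▸ h1)
          · have : 3*k = g - 1 := by omega
            exact htop (this ▸ h0)
  have hflt : ∀ k < m, f k < g := by
    intro k hk
    by_contra h
    exact (key k hk).1 (hvanish _ (by omega))
  have hinj : Set.InjOn f (Finset.range m) := by
    intro a ha b hb hab
    simp only [Finset.coe_range, Set.mem_Iio] at ha hb
    have ha' := (key a ha).2
    have hb' := (key b hb).2
    omega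
  set S : Finset ℕ := (Finset.range m).image f with hS
  have hcard : S.card = m := by
    rw [hS, Finset.card_image_of_injOn hinj, Finset.card_range]
  have hsub : S ⊆ Finset.range g := by
    intro x hx
    simp only [hS, Finset.mem_image, Finset.mem_range] at hx ⊢
    obtain ⟨k, hk, rfl⟩ := hx
    exact hflt k hk
  have h1 : (m : ℤ) ≤ ∑ i ∈ S, |t i| := by
    calc (m : ℤ) = ∑ _i ∈ S, 1 := by simp [hcard]
    _ ≤ ∑ i ∈ S, |t i| := by
        apply Finset.sum_le_sum
        intro i hi
        simp only [hS, Finset.mem_image, Finset.mem_range] at hi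
        obtain ⟨k, hk, rfl⟩ := hi
        exact Int.one_le_abs (key k hk).1
  have h2 : ∑ i ∈ S, |t i| ≤ ∑ i ∈ Finset.range g, |t i| :=
    Finset.sum_le_sum_of_subset_of_nonneg hsub (fun i _ _ => abs_nonneg _)
  rw [hsum]
  omega
end
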